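/- Let f(x,θ) = (1/(√(2π)θ)) e^{−x²/(2θ²)} and g(x,θ) = (1/(√(2π)θ)) (3/4 + x²/(4θ²)) e^{−x²/(2θ²)}. Then g(·,θ) is a probability density, N(θ) := ∫_ℝ (∂_θ g(x,θ))²/f(x,θ) dx = 6/θ², λ(θ) := ∫_ℝ (x⁴/3) g(x,θ) dx = 2θ⁴, and (λ′(θ))²/N(θ) = 32θ⁸/3 = Var_{f_θ}(X⁴/3). -/

import Mathlib

/-!
With `f = φ_θ` the `N(0, θ²)` density, the escort is `g = (3/4 + x²/(4θ²)) φ_θ` and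
`∂_θ φ_θ = (x²/θ³ - 1/θ) φ_θ`, so `∂_θ g = (x⁴/(4θ⁵) - 3/(4θ)) φ_θ`. Hence every integral in the
statement is that of an even polynomial of degree at most `8` against `φ_θ`, and is read off from
the even moments `∫ x^(2k) φ_θ = (2k-1)‼ θ^(2k)`, which follow from `∫ φ_θ = 1` by the integration
by parts `∫ x^(k+2) e^(-b x²) = (k+1)/(2b) ∫ x^k e^(-b x²)`.
-/

open MeasureTheory Real

open scoped Nat

section GaussianMoments

variable {b : ℝ}

lemma integrable_pow_mul_exp_neg_mul_sq (hb : 0 < b) (n : ℕ) :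
    Integrable (fun x : ℝ => x ^ n * exp (-b * x ^ 2)) := by
  simpa using integrable_rpow_mul_exp_neg_mul_sq hb (s := n) (by linarith [n.cast_nonneg (α := ℝ)])

lemma integral_pow_add_two_mul_exp_neg_mul_sq (hb : 0 < b) (k : ℕ) :
    ∫ x : ℝ, x ^ (k + 2) * exp (-b * x ^ 2)
      = (k + 1) / (2 * b) * ∫ x : ℝ, x ^ k * exp (-b * x ^ 2) := by
  have hderiv : ∀ x : ℝ, HasDerivAt (fun x => x ^ (k + 1) * exp (-b * x ^ 2))
      ((k + 1) * (x ^ k * exp (-b * x ^ 2)) - 2 * b * (x ^ (k + 2) * exp (-b * x ^ 2))) x := by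
    intro x
    refine ((hasDerivAt_pow (k + 1) x).mul
      (((hasDerivAt_pow 2 x).const_mul (-b)).exp)).congr_deriv ?_
    push_cast
    ring
  have h := integral_eq_zero_of_hasDerivAt_of_integrable hderiv
    (((integrable_pow_mul_exp_neg_mul_sq hb k).const_mul _).sub
      ((integrable_pow_mul_exp_neg_mul_sq hb (k + 2)).const_mul _))
    (integrable_pow_mul_exp_neg_mul_sq hb (k + 1))
  rw [integral_sub ((integrable_pow_mul_exp_neg_mul_sq hb k).const_mul _)
    ((integrable_pow_mul_exp_neg_mul_sq hb (k + 2)).const_mul _), integral_const_mul,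
    integral_const_mul, sub_eq_zero] at h
  rw [div_mul_eq_mul_div, eq_div_iff (by positivity)]
  linarith

end GaussianMoments

noncomputable def normalDensity (θ x : ℝ) : ℝ :=
  1 / (√(2 * π) * θ) * exp (-x ^ 2 / (2 * θ ^ 2))

section NormalDensity

variable {θ : ℝ}

lemma normalDensity_eq (θ x : ℝ) :
    normalDensity θ x = (√(2 * π) * θ)⁻¹ * exp (-(2 * θ ^ 2)⁻¹ * x ^ 2) := by
  rw [normalDensity, one_div, neg_div, neg_mul, div_eq_inv_mul]

lemma normalDensity_pos (hθ : 0 < θ) (x : ℝ) : 0 < normalDensity θ x := by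
  unfold normalDensity; positivity

lemma integrable_pow_mul_normalDensity (hθ : θ ≠ 0) (n : ℕ) :
    Integrable (fun x => x ^ n * normalDensity θ x) := by
  simp_rw [normalDensity_eq, mul_left_comm _ (√(2 * π) * θ)⁻¹]
  exact (integrable_pow_mul_exp_neg_mul_sq (by positivity) n).const_mul _

lemma integral_normalDensity (hθ : 0 < θ) : ∫ x, normalDensity θ x = 1 := by
  simp_rw [normalDensity_eq, integral_const_mul, integral_gaussian, div_inv_eq_mul]
  rw [show π * (2 * θ ^ 2) = (2 * π) * θ ^ 2 by ring, sqrt_mul (by positivity : (0 : ℝ) ≤ 2 * π),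
    sqrt_sq hθ.le, inv_mul_cancel₀ (by positivity)]

lemma integral_pow_add_two_mul_normalDensity (hθ : θ ≠ 0) (k : ℕ) :
    ∫ x, x ^ (k + 2) * normalDensity θ x = (k + 1) * θ ^ 2 * ∫ x, x ^ k * normalDensity θ x := by
  simp_rw [normalDensity_eq, mul_left_comm _ (√(2 * π) * θ)⁻¹, integral_const_mul,
    integral_pow_add_two_mul_exp_neg_mul_sq (inv_pos.2 (by positivity : 0 < 2 * θ ^ 2))]
  field_simp

lemma integral_pow_two_mul_mul_normalDensity (hθ : 0 < θ) (k : ℕ) :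
    ∫ x, x ^ (2 * k) * normalDensity θ x = (2 * k - 1)‼ * θ ^ (2 * k) := by
  induction k with
  | zero => simp [integral_normalDensity hθ]
  | succ k ih =>
    rw [mul_add_one, integral_pow_add_two_mul_normalDensity hθ.ne', ih,
      show 2 * k + 2 - 1 = 2 * k + 1 by omega, Nat.doubleFactorial_add_one]
    push_cast [show 2 * k + 1 - 1 = 2 * k by omega]
    ring

lemma integral_sum_mul_normalDensity (hθ : 0 < θ) {n : ℕ} (c : Fin n → ℝ) :
    ∫ x, (∑ j, c j * x ^ (2 * (j : ℕ))) * normalDensity θ x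
      = ∑ j, c j * (2 * (j : ℕ) - 1)‼ * θ ^ (2 * (j : ℕ)) := by
  simp_rw [Finset.sum_mul, mul_assoc]
  rw [integral_finsetSum _ fun j _ => (integrable_pow_mul_normalDensity hθ.ne' _).const_mul _]
  simp_rw [integral_const_mul, integral_pow_two_mul_mul_normalDensity hθ]

lemma hasDerivAt_normalDensity (hθ : θ ≠ 0) (x : ℝ) :
    HasDerivAt (fun t => normalDensity t x) ((x ^ 2 / θ ^ 3 - 1 / θ) * normalDensity θ x) θ := by
  refine (((hasDerivAt_const θ 1).fun_div ((hasDerivAt_id' θ).const_mul _) (by positivity)).fun_mul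
    ((hasDerivAt_const θ (-x ^ 2)).fun_div ((hasDerivAt_pow 2 θ).const_mul 2)
      (by positivity)).exp).congr_deriv ?_
  simp only [normalDensity]
  field_simp
  ring

lemma integral_even_octic_mul_normalDensity (hθ : 0 < θ) (a₀ a₁ a₂ a₃ a₄ : ℝ) :
    ∫ x, (a₀ + a₁ * x ^ 2 + a₂ * x ^ 4 + a₃ * x ^ 6 + a₄ * x ^ 8) * normalDensity θ x
      = a₀ + a₁ * θ ^ 2 + 3 * a₂ * θ ^ 4 + 15 * a₃ * θ ^ 6 + 105 * a₄ * θ ^ 8 := by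
  have h := integral_sum_mul_normalDensity hθ ![a₀, a₁, a₂, a₃, a₄]
  simp [Fin.sum_univ_five, Nat.doubleFactorial] at h
  rw [h]
  ring

end NormalDensity

noncomputable def escortDensity (θ x : ℝ) : ℝ :=
  (3 / 4 + x ^ 2 / (4 * θ ^ 2)) * normalDensity θ x

section EscortDensity

variable {θ : ℝ}

lemma hasDerivAt_escortDensity (hθ : θ ≠ 0) (x : ℝ) :
    HasDerivAt (fun t => escortDensity t x)
      ((x ^ 4 / (4 * θ ^ 5) - 3 / (4 * θ)) * normalDensity θ x) θ := by
  refine ((((hasDerivAt_const θ (x ^ 2)).fun_div ((hasDerivAt_pow 2 θ).const_mul 4)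
    (by positivity)).const_add (3 / 4)).fun_mul (hasDerivAt_normalDensity hθ x)).congr_deriv ?_
  field_simp
  ring

lemma integral_escortDensity (hθ : 0 < θ) : ∫ x, escortDensity θ x = 1 := by
  calc ∫ x, escortDensity θ x
      = ∫ x, (3 / 4 + 1 / (4 * θ ^ 2) * x ^ 2 + 0 * x ^ 4 + 0 * x ^ 6 + 0 * x ^ 8)
          * normalDensity θ x := by
        congr with x; rw [escortDensity]; ring
    _ = 1 := by rw [integral_even_octic_mul_normalDensity hθ]; field_simp; ring

lemma integral_deriv_escortDensity_sq_div_normalDensity (hθ : 0 < θ) :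
    ∫ x, (deriv (fun t => escortDensity t x) θ) ^ 2 / normalDensity θ x = 6 / θ ^ 2 := by
  calc ∫ x, (deriv (fun t => escortDensity t x) θ) ^ 2 / normalDensity θ x
      = ∫ x, (9 / (16 * θ ^ 2) + 0 * x ^ 2 + -6 / (16 * θ ^ 6) * x ^ 4 + 0 * x ^ 6
          + 1 / (16 * θ ^ 10) * x ^ 8) * normalDensity θ x := by
        congr with x
        rw [(hasDerivAt_escortDensity hθ.ne' x).deriv]
        field_simp [(normalDensity_pos hθ x).ne']
        ring
    _ = 6 / θ ^ 2 := by rw [integral_even_octic_mul_normalDensity hθ]; field_simp; ring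

lemma integral_pow_four_div_three_mul_escortDensity (hθ : 0 < θ) :
    ∫ x, x ^ 4 / 3 * escortDensity θ x = 2 * θ ^ 4 := by
  calc ∫ x, x ^ 4 / 3 * escortDensity θ x
      = ∫ x, (0 + 0 * x ^ 2 + 1 / 4 * x ^ 4 + 1 / (12 * θ ^ 2) * x ^ 6 + 0 * x ^ 8)
          * normalDensity θ x := by
        congr with x; rw [escortDensity]; ring
    _ = 2 * θ ^ 4 := by rw [integral_even_octic_mul_normalDensity hθ]; field_simp; ring

end EscortDensity

lemma integral_pow_four_div_three_sub_sq_mul_normalDensity {θ : ℝ} (hθ : 0 < θ) :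
    ∫ x, (x ^ 4 / 3 - θ ^ 4) ^ 2 * normalDensity θ x = 32 * θ ^ 8 / 3 := by
  calc ∫ x, (x ^ 4 / 3 - θ ^ 4) ^ 2 * normalDensity θ x
      = ∫ x, (θ ^ 8 + 0 * x ^ 2 + -2 * θ ^ 4 / 3 * x ^ 4 + 0 * x ^ 6 + 1 / 9 * x ^ 8)
          * normalDensity θ x := by congr with x; ring
    _ = 32 * θ ^ 8 / 3 := by rw [integral_even_octic_mul_normalDensity hθ]; ring

/-- Naudts's generalized bound attained for the normal scale family: with
`f(x,θ)` the `N(0,θ²)` density and escort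
`g(x,θ) = (3/4 + x²/(4θ²)) e^(−x²/(2θ²))/(√(2π)θ)`, `g` is a density,
`N(θ) = 6/θ²`, `λ(θ) = 2θ⁴`, and `(λ′(θ))²/N(θ) = 32θ⁸/3 = Var_{f_θ}(X⁴/3)`. -/
theorem normal_naudts_bound_attained
    (θ : ℝ) (hθ : 0 < θ)
    (f g : ℝ → ℝ → ℝ)
    (hf : ∀ x t, f x t = 1 / (Real.sqrt (2 * Real.pi) * t) * Real.exp (-x ^ 2 / (2 * t ^ 2)))
    (hg : ∀ x t, g x t = 1 / (Real.sqrt (2 * Real.pi) * t) * (3 / 4 + x ^ 2 / (4 * t ^ 2)) *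
      Real.exp (-x ^ 2 / (2 * t ^ 2))) :
    (∫ x : ℝ, g x θ) = 1 ∧
    (∫ x : ℝ, (deriv (fun t => g x t) θ) ^ 2 / f x θ) = 6 / θ ^ 2 ∧
    (∫ x : ℝ, (x ^ 4 / 3) * g x θ) = 2 * θ ^ 4 ∧
    (deriv (fun t : ℝ => 2 * t ^ 4) θ) ^ 2 / (6 / θ ^ 2) = 32 * θ ^ 8 / 3 ∧
    (32 : ℝ) * θ ^ 8 / 3 = ∫ x : ℝ, (x ^ 4 / 3 - θ ^ 4) ^ 2 * f x θ := by
  have hf' : f = fun x t => normalDensity t x := funext₂ hf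
  have hg' : g = fun x t => escortDensity t x := by
    ext x t; rw [hg, escortDensity, normalDensity]; ring
  subst hf' hg'
  refine ⟨integral_escortDensity hθ, integral_deriv_escortDensity_sq_div_normalDensity hθ,
    integral_pow_four_div_three_mul_escortDensity hθ, ?_,
    (integral_pow_four_div_three_sub_sq_mul_normalDensity hθ).symm⟩
  rw [((hasDerivAt_pow 4 θ).const_mul 2).deriv]
  field_simp
  ring
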